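/- Let R be an integral domain with fraction field K, M a finitely generated free R-module of rank m, and X a closed subset of affine m-space over R with vanishing ideal I ⊆ R[x_1,...,x_m]. Then there exists a nonzero r ∈ R such that for any f ∈ R[x_1,...,x_m]: if f vanishes identically on X(\bar{K}), then f vanishes identically on X(\bar{K_p}) for all primes p ∈ Spec(R[1/r]). -/

import Mathlib

/-!
By the Nullstellensatz, `f` vanishes on `X(K̄)` exactly when its image lies in the radical `J`
of `I·K[x]`. Take a finite set `B ⊆ J` of monic polynomials whose leading monomials generate the
initial ideal of `J`, and `t ≠ 0` such that every `t·b` has coefficients in `R`; then `t·b` has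
leading coefficient `t`, and pseudo-division by these polynomials gives `tⁿ f ∈ (t·b : b ∈ B)`
for every `f ∈ R[x]` whose image lies in `J`. Since a power of each `b` lies in `I·K[x]`, some
`s ≠ 0` gives `s·(t·b)ᵏ ∈ I`. For `r = t·∏ s`, every prime of `R[x]` containing `I` but not `r`
contains all `t·b`, hence `f`; the kernel of evaluation at a point of `X(K̄_p)`, `r ∉ p`, is one.
-/
open MvPolynomial

/-- The zero set, in `F^m`, of (the image under `ρ` of) an ideal of `R[x_1,...,x_m]`. -/
def zeroSet {R F : Type*} [CommRing R] [CommRing F] {m : ℕ}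
    (I : Ideal (MvPolynomial (Fin m) R)) (ρ : R →+* F) : Set (Fin m → F) :=
  {x | ∀ f ∈ I, MvPolynomial.eval x (MvPolynomial.map ρ f) = 0}

namespace MonomialOrder

variable {σ A : Type*} [CommRing A] (m : MonomialOrder σ)

noncomputable def pseudoReduce (g f : MvPolynomial σ A) : MvPolynomial σ A :=
  C (m.leadingCoeff g) * f - monomial (m.degree f - m.degree g) (m.leadingCoeff f) * g

variable {m}

theorem degree_pseudoReduce_lt {f g : MvPolynomial σ A} (hgf : m.degree g ≤ m.degree f)
    (hne : m.pseudoReduce g f ≠ 0) : m.degree (m.pseudoReduce g f) ≺[m] m.degree f := by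
  set e := m.degree f - m.degree g
  have hdeg : e + m.degree g = m.degree f := tsub_add_cancel_of_le hgf
  have hle : m.degree (m.pseudoReduce g f) ≼[m] m.degree f := by
    refine le_trans degree_sub_le (sup_le ?_ ?_)
    · exact le_trans degree_mul_le (by simp [degree_C])
    · calc m.toSyn (m.degree (monomial e (m.leadingCoeff f) * g))
          ≤ m.toSyn (m.degree (monomial e (m.leadingCoeff f))) + m.toSyn (m.degree g) := by
            rw [← map_add]; exact degree_mul_le
        _ ≤ m.toSyn e + m.toSyn (m.degree g) := add_le_add_left (degree_monomial_le _) _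
        _ = m.toSyn (m.degree f) := by rw [← map_add, hdeg]
  have hcoeff : (m.pseudoReduce g f).coeff (m.degree f) = 0 := by
    have hmul : (monomial e (m.leadingCoeff f) * g).coeff (m.degree f) =
        m.leadingCoeff f * m.leadingCoeff g := by
      rw [← hdeg, coeff_monomial_mul]; rfl
    rw [pseudoReduce, coeff_sub, coeff_C_mul, hmul]
    exact sub_eq_zero.mpr (mul_comm _ _)
  refine lt_of_le_of_ne hle fun h => hne ?_
  rwa [← m.toSyn.injective h, coeff_degree_eq_zero_iff] at hcoeff

theorem exists_C_pow_mul_mem_span_of_degree_le {N : Ideal (MvPolynomial σ A)}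
    {G : Set (MvPolynomial σ A)} {t : A} (hGN : G ⊆ N) (hGt : ∀ g ∈ G, m.leadingCoeff g = t)
    (hcover : ∀ f ∈ N, f ≠ 0 → ∃ g ∈ G, m.degree g ≤ m.degree f) :
    ∀ f ∈ N, ∃ n : ℕ, C (t ^ n) * f ∈ Ideal.span G := by
  suffices ∀ δ : m.syn, ∀ f ∈ N, m.toSyn (m.degree f) = δ →
      ∃ n : ℕ, C (t ^ n) * f ∈ Ideal.span G from fun f hf => this _ f hf rfl
  intro δ
  induction δ using WellFoundedLT.induction with
  | _ δ ih =>
  rintro f hfN rfl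
  by_cases hf : f = 0
  · exact ⟨0, by simp [hf]⟩
  obtain ⟨g, hgG, hgf⟩ := hcover f hfN hf
  have hmul : monomial (m.degree f - m.degree g) (m.leadingCoeff f) * g ∈ Ideal.span G :=
    Ideal.mul_mem_left _ _ (Ideal.subset_span hgG)
  have hsplit : C t * f = m.pseudoReduce g f +
      monomial (m.degree f - m.degree g) (m.leadingCoeff f) * g := by
    rw [pseudoReduce, hGt g hgG, sub_add_cancel]
  by_cases hr : m.pseudoReduce g f = 0
  · exact ⟨1, by rwa [pow_one, hsplit, hr, zero_add]⟩
  have hrN : m.pseudoReduce g f ∈ N :=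
    sub_mem (N.mul_mem_left _ hfN) (N.mul_mem_left _ (hGN hgG))
  obtain ⟨n, hn⟩ := ih _ (degree_pseudoReduce_lt hgf hr) _ hrN rfl
  refine ⟨n + 1, ?_⟩
  rw [pow_succ, C_mul, mul_assoc, hsplit, mul_add]
  exact add_mem hn (Ideal.mul_mem_left _ _ hmul)

theorem degree_map_of_injective {B : Type*} [CommRing B] {φ : A →+* B}
    (hφ : Function.Injective φ) (f : MvPolynomial σ A) : m.degree (map φ f) = m.degree f := by
  simp only [degree, support_map_of_injective f hφ]

theorem leadingCoeff_map_of_injective {B : Type*} [CommRing B] {φ : A →+* B}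
    (hφ : Function.Injective φ) (f : MvPolynomial σ A) :
    m.leadingCoeff (map φ f) = φ (m.leadingCoeff f) := by
  rw [leadingCoeff, degree_map_of_injective hφ, coeff_map, leadingCoeff]

variable (m) in
theorem exists_finset_monic_degree_le {k : Type*} [Field k] [Finite σ]
    (J : Ideal (MvPolynomial σ k)) :
    ∃ B : Finset (MvPolynomial σ k), (∀ b ∈ B, b ∈ J ∧ m.Monic b) ∧
      ∀ f ∈ J, f ≠ 0 → ∃ b ∈ B, m.degree b ≤ m.degree f := by
  classical
  set M := {b | b ∈ J ∧ m.Monic b}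
  have hmonic : ∀ f ∈ J, f ≠ 0 → ∃ b ∈ M, m.degree b = m.degree f := by
    intro f hf hf0
    have hc : IsRegular (m.leadingCoeff f)⁻¹ :=
      IsRegular.of_ne_zero (inv_ne_zero (m.leadingCoeff_ne_zero_iff.mpr hf0))
    refine ⟨(m.leadingCoeff f)⁻¹ • f, ⟨J.smul_of_tower_mem _ hf, ?_⟩, degree_smul_of_isRegular hc⟩
    rw [Monic, leadingCoeff, degree_smul_of_isRegular hc, coeff_smul, smul_eq_mul,
      ← leadingCoeff, inv_mul_cancel₀ (m.leadingCoeff_ne_zero_iff.mpr hf0)]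
  obtain ⟨s, hsM, hspan⟩ := (Submodule.fg_span_iff_fg_span_finset_subset
    ((fun b => monomial (m.degree b) (1 : k)) '' M)).mp
    (IsNoetherian.noetherian (R := MvPolynomial σ k) _)
  obtain ⟨B, hBM, rfl⟩ := Finset.subset_set_image_iff.mp hsM
  refine ⟨B, fun b hb => hBM hb, fun f hf hf0 => ?_⟩
  obtain ⟨b, hbM, hb⟩ := hmonic f hf hf0
  have hmem : monomial (m.degree f) (1 : k) ∈
      Ideal.span ((fun d => monomial d 1) '' (m.degree '' (B : Set (MvPolynomial σ k)))) := by
    rw [Set.image_image, ← Finset.coe_image, Ideal.span, ← hspan]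
    exact Submodule.subset_span ⟨b, hbM, congrArg (monomial · 1) hb⟩
  obtain ⟨_, ⟨b', hb', rfl⟩, hle⟩ :=
    mem_ideal_span_monomial_image.mp hmem (m.degree f) (by simp [support_monomial])
  exact ⟨b', hb', hle⟩

end MonomialOrder

namespace MvPolynomial

variable {σ R K : Type*} [CommRing R] [IsDomain R] [Field K] [Algebra R K] [IsFractionRing R K]

-- makes `MvPolynomial σ K` the localization of `MvPolynomial σ R` at the nonzero constants
attribute [local instance] MvPolynomial.algebraMvPolynomial

theorem exists_map_eq_C_mul_of_finset (B : Finset (MvPolynomial σ K)) :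
    ∃ t : R, t ≠ 0 ∧ ∀ b ∈ B, ∃ g : MvPolynomial σ R,
      map (algebraMap R K) g = C (algebraMap R K t) * b := by
  obtain ⟨⟨_, t, ht, rfl⟩, hB⟩ :=
    IsLocalization.exist_integer_multiples_of_finset ((nonZeroDivisors R).map (C (σ := σ))) B
  refine ⟨t, nonZeroDivisors.ne_zero ht, fun b hb => ?_⟩
  obtain ⟨g, hg⟩ := hB b hb
  exact ⟨g, by rw [← algebraMap_def, hg, Algebra.smul_def, algebraMap_def, map_C]⟩

theorem exists_C_mul_mem_of_map_mem {I : Ideal (MvPolynomial σ R)} {f : MvPolynomial σ R}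
    (hf : map (algebraMap R K) f ∈ I.map (map (algebraMap R K))) :
    ∃ s : R, s ≠ 0 ∧ C s * f ∈ I := by
  rw [← algebraMap_def, IsLocalization.mem_map_algebraMap_iff
    ((nonZeroDivisors R).map (C (σ := σ))) (MvPolynomial σ K)] at hf
  obtain ⟨⟨⟨h, hI⟩, ⟨_, s, hs, rfl⟩⟩, hfh⟩ := hf
  refine ⟨s, nonZeroDivisors.ne_zero hs, ?_⟩
  rw [← map_mul, algebraMap_def] at hfh
  rwa [mul_comm, map_injective _ (IsFractionRing.injective R K) hfh]

theorem exists_C_pow_mul_mem_span_of_map_mem [Finite σ] [LinearOrder σ]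
    (J : Ideal (MvPolynomial σ K)) :
    ∃ t : R, t ≠ 0 ∧ ∃ G : Finset (MvPolynomial σ R), (∀ g ∈ G, map (algebraMap R K) g ∈ J) ∧
      ∀ f, map (algebraMap R K) f ∈ J → ∃ n : ℕ, C (t ^ n) * f ∈ Ideal.span G := by
  classical
  set ι := algebraMap R K
  have hι : Function.Injective ι := IsFractionRing.injective R K
  set m : MonomialOrder σ := MonomialOrder.lex
  obtain ⟨B, hBJ, hcover⟩ := m.exists_finset_monic_degree_le J
  obtain ⟨t, ht, hlift⟩ := exists_map_eq_C_mul_of_finset (R := R) B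
  choose! g hg using hlift
  have hgJ : ∀ b ∈ B, map ι (g b) ∈ J := fun b hb => by
    rw [hg b hb]; exact J.mul_mem_left _ (hBJ b hb).1
  have hgdeg : ∀ b ∈ B, m.degree (g b) = m.degree b ∧ m.leadingCoeff (g b) = t := by
    intro b hb
    have hreg : IsRegular (ι t) := IsRegular.of_ne_zero ((map_ne_zero_iff ι hι).mpr ht)
    have hgb : map ι (g b) = ι t • b := by rw [hg b hb, smul_eq_C_mul]
    refine ⟨by rw [← m.degree_map_of_injective hι, hgb, m.degree_smul_of_isRegular hreg], hι ?_⟩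
    rw [← m.leadingCoeff_map_of_injective hι, MonomialOrder.leadingCoeff, hgb,
      m.degree_smul_of_isRegular hreg, coeff_smul, (hBJ b hb).2.coeff_degree, smul_eq_mul, mul_one]
  refine ⟨t, ht, B.image g, by simpa using hgJ, fun f hf => ?_⟩
  refine m.exists_C_pow_mul_mem_span_of_degree_le (N := J.comap (map ι)) ?_ ?_ ?_ f hf
  · simpa [Set.subset_def] using hgJ
  · simpa using fun b hb => (hgdeg b hb).2
  · intro f hf hf0
    obtain ⟨b, hb, hle⟩ := hcover _ hf ((map_ne_zero_iff _ (map_injective _ hι)).mpr hf0)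
    refine ⟨g b, by simpa using ⟨b, hb, rfl⟩, ?_⟩
    rwa [(hgdeg b hb).1, ← m.degree_map_of_injective hι f]

theorem exists_forall_mem_of_map_mem_radical [Finite σ] [LinearOrder σ]
    (I : Ideal (MvPolynomial σ R)) :
    ∃ r : R, r ≠ 0 ∧ ∀ f, map (algebraMap R K) f ∈ (I.map (map (algebraMap R K))).radical →
      ∀ P : Ideal (MvPolynomial σ R), P.IsPrime → I ≤ P → C r ∉ P → f ∈ P := by
  obtain ⟨t, ht, G, hGJ, hdiv⟩ :=
    exists_C_pow_mul_mem_span_of_map_mem (R := R) (I.map (map (algebraMap R K))).radical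
  have hpow : ∀ g ∈ G, ∃ s : R, s ≠ 0 ∧ ∃ n : ℕ, C s * g ^ n ∈ I := by
    intro g hg
    obtain ⟨n, hn⟩ := hGJ g hg
    obtain ⟨s, hs, hsI⟩ := exists_C_mul_mem_of_map_mem (K := K) (f := g ^ n) (by rwa [map_pow])
    exact ⟨s, hs, n, hsI⟩
  choose! s hs n hn using hpow
  set r := t * ∏ g ∈ G, s g
  refine ⟨r, mul_ne_zero ht (Finset.prod_ne_zero_iff.mpr hs), fun f hf P hP hIP hrP => ?_⟩
  have hnotMem : ∀ a : R, a ∣ r → C a ∉ P := fun a ha h => hrP (P.mem_of_dvd (map_dvd C ha) h)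
  have hGP : Ideal.span (G : Set (MvPolynomial σ R)) ≤ P := Ideal.span_le.mpr fun g hg =>
    hP.mem_of_pow_mem _ ((hP.mem_or_mem (hIP (hn g hg))).resolve_left
      (hnotMem _ (dvd_mul_of_dvd_right (Finset.dvd_prod_of_mem s hg) t)))
  obtain ⟨k, hk⟩ := hdiv f hf
  refine (hP.mem_or_mem (hGP hk)).resolve_left fun h => hnotMem t (dvd_mul_right t _) ?_
  exact hP.mem_of_pow_mem k (by rwa [← C_pow])

end MvPolynomial

theorem mem_zeroSet_iff_le_ker {R F : Type*} [CommRing R] [CommRing F] {m : ℕ}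
    {I : Ideal (MvPolynomial (Fin m) R)} {ρ : R →+* F} {x : Fin m → F} :
    x ∈ zeroSet I ρ ↔ I ≤ RingHom.ker (eval₂Hom ρ x) := by
  simp only [zeroSet, Set.mem_ofPred_eq, SetLike.le_def, RingHom.mem_ker, coe_eval₂Hom, eval_map]

theorem map_mem_radical_of_forall_eval_eq_zero {R K Ω : Type*} [CommRing R] [Field K]
    [Algebra R K] [Field Ω] [Algebra K Ω] [IsAlgClosed Ω] {m : ℕ}
    (I : Ideal (MvPolynomial (Fin m) R)) {f : MvPolynomial (Fin m) R}
    (hf : ∀ x ∈ zeroSet I ((algebraMap K Ω).comp (algebraMap R K)),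
      eval x (map ((algebraMap K Ω).comp (algebraMap R K)) f) = 0) :
    map (algebraMap R K) f ∈ (I.map (map (algebraMap R K))).radical := by
  have haeval : ∀ (x : Fin m → Ω) p, aeval x (map (algebraMap R K) p) =
      eval x (map ((algebraMap K Ω).comp (algebraMap R K)) p) := fun x p => by
    rw [aeval_def, eval₂_map, eval_map]
  rw [← vanishingIdeal_zeroLocus_eq_radical (K := Ω), mem_vanishingIdeal_iff]
  intro x hx
  rw [haeval]
  exact hf x fun p hp => by rw [← haeval]; exact hx _ (Ideal.mem_map_of_mem _ hp)

theorem vanishing_spreads_out (R : Type*) [CommRing R] [IsDomain R] (m : ℕ)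
    (I : Ideal (MvPolynomial (Fin m) R)) :
    ∃ r : R, r ≠ 0 ∧ ∀ f : MvPolynomial (Fin m) R,
      (∀ x ∈ zeroSet I
          ((algebraMap (FractionRing R) (AlgebraicClosure (FractionRing R))).comp
            (algebraMap R (FractionRing R))),
        MvPolynomial.eval x (MvPolynomial.map
          ((algebraMap (FractionRing R) (AlgebraicClosure (FractionRing R))).comp
            (algebraMap R (FractionRing R))) f) = 0) →
      ∀ (p : Ideal R) [p.IsPrime], r ∉ p →
        ∀ x ∈ zeroSet I
            ((algebraMap (FractionRing (R ⧸ p))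
                (AlgebraicClosure (FractionRing (R ⧸ p)))).comp
              ((algebraMap (R ⧸ p) (FractionRing (R ⧸ p))).comp (Ideal.Quotient.mk p))),
          MvPolynomial.eval x (MvPolynomial.map
            ((algebraMap (FractionRing (R ⧸ p))
                (AlgebraicClosure (FractionRing (R ⧸ p)))).comp
              ((algebraMap (R ⧸ p) (FractionRing (R ⧸ p))).comp (Ideal.Quotient.mk p))) f)
            = 0 := by
  obtain ⟨r, hr0, hr⟩ := exists_forall_mem_of_map_mem_radical (K := FractionRing R) I
  refine ⟨r, hr0, fun f hf p _ hrp x hx => ?_⟩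
  rw [mem_zeroSet_iff_le_ker] at hx
  rw [eval_map, ← coe_eval₂Hom, ← RingHom.mem_ker]
  refine hr f (map_mem_radical_of_forall_eval_eq_zero I hf) _ (RingHom.ker_isPrime _) hx ?_
  simpa [RingHom.mem_ker, Ideal.Quotient.eq_zero_iff_mem] using hrp
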